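/- For any n×n matrix A = (a_{i,j}) with nonnegative real entries, the permanent equals the expectation of the squared determinant over independent uniform signs: perm(A) = 2^{−n²} · Σ_{ε ∈ {±1}^{n×n}} det(B_ε)², where (B_ε)_{i,j} = ε_{i,j}·√(a_{i,j}). -/

import Mathlib

open Finset

/-- The permanent of an `n × n` real matrix. -/
noncomputable def perma {n : ℕ} (A : Matrix (Fin n) (Fin n) ℝ) : ℝ :=
  ∑ σ : Equiv.Perm (Fin n), ∏ i, A i (σ i)

/-!
Expanding `det (ε ∘ M) ^ 2` over pairs of permutations `(σ, τ)`, each term carries the sign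
monomial `∏ i, ε (σ i) i * ε (τ i) i`. Averaged over uniform signs this monomial is `1` when
`σ = τ` and `0` otherwise, so only the diagonal survives and leaves `∑ σ, ∏ i, M (σ i) i ^ 2`,
the permanent of the entrywise square. With `M = √A` this is `perm A`.
-/

open Matrix Equiv

variable {R : Type*} [CommRing R]

def boolSign (b : Bool) : R := if b then 1 else -1

@[simp]
lemma boolSign_mul_self (b : Bool) : boolSign b * boolSign b = (1 : R) := by
  cases b <;> simp [boolSign]

@[simp]
lemma boolSign_not (b : Bool) : boolSign (!b) = -(boolSign b : R) := by
  cases b <;> simp [boolSign]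

section Orthogonality

variable {ι κ : Type*} [Fintype ι] [Fintype κ] [DecidableEq ι] [DecidableEq κ]

lemma sum_prod_boolSign_mul_self (σ : ι → κ) :
    ∑ ε : κ → ι → Bool, ∏ i, (boolSign (ε (σ i) i) * boolSign (ε (σ i) i) : R)
      = 2 ^ (Fintype.card κ * Fintype.card ι) := by
  simp [← pow_mul, mul_comm]

/-- Flipping the sign in cell `(σ i₀, i₀)`, which `τ` avoids in column `i₀`, negates the summand. -/
lemma sum_prod_boolSign_mul_eq_zero {σ τ : ι → κ} (hστ : σ ≠ τ) :
    ∑ ε : κ → ι → Bool, ∏ i, (boolSign (ε (σ i) i) * boolSign (ε (τ i) i) : R) = 0 := by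
  obtain ⟨i₀, hi₀⟩ := Function.ne_iff.mp hστ
  let flip (ε : κ → ι → Bool) : κ → ι → Bool :=
    fun k i => if k = σ i₀ ∧ i = i₀ then !ε k i else ε k i
  have flip_flip (ε) : flip (flip ε) = ε := by
    funext k i
    by_cases h : k = σ i₀ ∧ i = i₀ <;> simp [flip, h]
  have flip_ne (ε) : flip ε ≠ ε := fun h => by
    simpa [flip] using congr_fun (congr_fun h (σ i₀)) i₀
  refine sum_ninvolution flip (fun ε => ?_) (fun ε _ => flip_ne ε)
    (fun _ => mem_univ _) flip_flip
  rw [Fintype.prod_eq_mul_prod_compl i₀, Fintype.prod_eq_mul_prod_compl i₀,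
    prod_congr rfl fun i hi => ?_]
  · simp only [flip, and_self, ↓reduceIte, boolSign_not, Ne.symm hi₀, and_true, neg_mul]
    ring
  · simp_all [flip]

end Orthogonality

variable {ι : Type*} [Fintype ι] [DecidableEq ι]

lemma det_sq_eq_sum_sum (M : Matrix ι ι R) :
    det M ^ 2 = ∑ σ : Perm ι, ∑ τ : Perm ι,
      ((Perm.sign σ * Perm.sign τ : ℤˣ) : R) * ∏ i, M (σ i) i * M (τ i) i := by
  rw [sq, det_apply', sum_mul_sum]
  simp only [prod_mul_distrib, Units.val_mul, Int.cast_mul]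
  congr! 2
  ring

theorem sum_det_boolSign_mul_sq (M : Matrix ι ι R) :
    ∑ ε : ι → ι → Bool, det (of fun i j => boolSign (ε i j) * M i j) ^ 2
      = 2 ^ (Fintype.card ι ^ 2) * permanent (of fun i j => M i j ^ 2) := by
  let c (σ τ : Perm ι) : R := ((Perm.sign σ * Perm.sign τ : ℤˣ) : R) * ∏ i, M (σ i) i * M (τ i) i
  calc ∑ ε : ι → ι → Bool, det (of fun i j => boolSign (ε i j) * M i j) ^ 2
      = ∑ σ : Perm ι, ∑ τ : Perm ι, c σ τ *
          ∑ ε : ι → ι → Bool, ∏ i, (boolSign (ε (σ i) i) * boolSign (ε (τ i) i) : R) := by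
        simp only [det_sq_eq_sum_sum, of_apply, mul_sum]
        rw [sum_comm]
        refine sum_congr rfl fun σ _ => ?_
        rw [sum_comm]
        refine sum_congr rfl fun τ _ => sum_congr rfl fun ε _ => ?_
        simp only [c, prod_mul_distrib]
        ring
    _ = ∑ σ : Perm ι, c σ σ * 2 ^ (Fintype.card ι * Fintype.card ι) := by
        refine sum_congr rfl fun σ _ => ?_
        have off_diagonal (τ : Perm ι) (_ : τ ∈ univ) (hτ : τ ≠ σ) : c σ τ *
            ∑ ε : ι → ι → Bool, ∏ i, (boolSign (ε (σ i) i) * boolSign (ε (τ i) i) : R) = 0 := by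
          rw [sum_prod_boolSign_mul_eq_zero (DFunLike.coe_injective.ne hτ.symm), mul_zero]
        rw [sum_eq_single σ off_diagonal (by simp), sum_prod_boolSign_mul_self]
    _ = _ := by
        simp only [c, Int.units_mul_self, Units.val_one, Int.cast_one, one_mul, permanent, of_apply,
          mul_sum, sq, mul_comm]

lemma perma_eq_permanent {n : ℕ} (A : Matrix (Fin n) (Fin n) ℝ) : perma A = A.permanent := by
  rw [← permanent_transpose]
  rfl

theorem permanent_as_expected_squared_determinant {n : ℕ}
    (A : Matrix (Fin n) (Fin n) ℝ) (hA : ∀ i j, 0 ≤ A i j) :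
    perma A
      = (2 : ℝ) ^ (-(n ^ 2 : ℤ)) *
          ∑ ε : Fin n → Fin n → Bool,
            (Matrix.det (fun i j => (if ε i j then (1 : ℝ) else -1) * Real.sqrt (A i j))) ^ 2 := by
  have hsqrt : (of fun i j => √(A i j) ^ 2) = A := by
    ext i j
    exact Real.sq_sqrt (hA i j)
  have h := sum_det_boolSign_mul_sq (of fun i j => √(A i j))
  simp only [of_apply, hsqrt, Fintype.card_fin] at h
  change _ = _ * ∑ ε : Fin n → Fin n → Bool, det (of fun i j => boolSign (ε i j) * √(A i j)) ^ 2
  rw [h, ← mul_assoc, _root_.zpow_neg, ← Nat.cast_pow, zpow_natCast,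
    inv_mul_cancel₀ (by positivity), one_mul, perma_eq_permanent]
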